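/- A parameter vector x = ((a_{i,j}), (ξ_i)) ∈ ℂ^R is a critical point of the Prony map P (i.e., det J_P(x) = 0) if and only if at least one of the following holds: (1) ξ_i = ξ_j for some pair of indices i ≠ j; (2) a_{i,l_i−1} = 0 for some 1 ≤ i ≤ n. -/

import Mathlib

open scoped BigOperators

noncomputable section

/-- Offset of the `i`-th block of columns: the sum of the multiplicities of all previous blocks. -/
def blockOff {n : ℕ} (L : Fin n → ℕ) (i : Fin n) : ℕ := ∑ i' ∈ Finset.Iio i, L i'

theorem blockOff_add_lt {n : ℕ} (L : Fin n → ℕ) (i : Fin n) {j : ℕ} (hj : j < L i) :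
    blockOff L i + j < ∑ i', L i' := by
  have h1 : ∑ i' ∈ insert i (Finset.Iio i), L i' = ∑ i' ∈ Finset.Iio i, L i' + L i := by
    rw [Finset.sum_insert (by simp)]; ring
  have h2 : ∑ i' ∈ insert i (Finset.Iio i), L i' ≤ ∑ i', L i' :=
    Finset.sum_le_sum_of_subset (Finset.subset_univ _)
  unfold blockOff
  omega

/-- The flattened index of position `j` inside block `i`, when block `i` has size `L i`. -/
def encC {n : ℕ} (L : Fin n → ℕ) (i : Fin n) (j : Fin (L i)) : Fin (∑ i', L i') :=
  ⟨blockOff L i + j, blockOff_add_lt L i j.isLt⟩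

/-- The (square) confluent Vandermonde matrix on nodes `ξ_i` with multiplicities `L i`:
rows are indexed by `k = 0,…,(∑ L i)−1`; the entry in row `k` and column `j` of block `i`
is `(k)_j ξ_i^{k−j}` (zero when `j > k`). -/
def confVand {n : ℕ} (L : Fin n → ℕ) (ξ : Fin n → ℂ) :
    Matrix (Fin (∑ i, L i)) (Fin (∑ i, L i)) ℂ :=
  fun k c => ∑ i, ∑ j : Fin (L i),
    if c = encC L i j then ((k : ℕ).descFactorial j : ℂ) * ξ i ^ ((k : ℕ) - (j : ℕ)) else 0

/-- The index (in the parameter vector) of the magnitude `a_{i,j}` (`j < l i`) or,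
for `j = l i`, of the node `ξ_i`; the parameters are ordered
`(a_{1,0},…,a_{1,l_1−1}, ξ_1, …, a_{n,0},…,a_{n,l_n−1}, ξ_n)`. -/
def encP {n : ℕ} (l : Fin n → ℕ) (i : Fin n) (j : Fin (l i + 1)) :
    Fin (∑ i', (l i' + 1)) :=
  encC (fun i' => l i' + 1) i j

/-- The parameter vector `x = (a_{1,0},…,a_{1,l_1−1}, ξ_1, …, a_{n,0},…,a_{n,l_n−1}, ξ_n)`. -/
def pronyParam {n : ℕ} (l : Fin n → ℕ) (ξ : Fin n → ℂ)
    (a : (i : Fin n) → Fin (l i) → ℂ) : Fin (∑ i', (l i' + 1)) → ℂ :=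
  fun p => ∑ i, ∑ j : Fin (l i + 1),
    if p = encP l i j then (if h : (j : ℕ) < l i then a i ⟨j, h⟩ else ξ i) else 0

/-- The Prony map `P : ℂ^R → ℂ^R` sending the parameter vector
`x = (a_{1,0},…,a_{1,l_1−1}, ξ_1, …, a_{n,0},…,a_{n,l_n−1}, ξ_n)` to the moment vector
`(m_0,…,m_{R−1})`, `m_k = Σ_i Σ_{j<l_i} a_{i,j} (k)_j ξ_i^{k−j}`. -/
def pronyMap {n : ℕ} (l : Fin n → ℕ) (x : Fin (∑ i', (l i' + 1)) → ℂ) :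
    Fin (∑ i', (l i' + 1)) → ℂ :=
  fun k => ∑ i, ∑ j : Fin (l i),
    x (encP l i (Fin.castSucc j)) * ((k : ℕ).descFactorial j : ℂ) *
      (x (encP l i (Fin.last (l i)))) ^ ((k : ℕ) - (j : ℕ))

/-- The Jacobian matrix of the Prony map at `x`: the `(k,p)` entry is the partial
derivative of the `k`-th moment with respect to the `p`-th parameter. -/
def pronyJacobian {n : ℕ} (l : Fin n → ℕ) (x : Fin (∑ i', (l i' + 1)) → ℂ) :
    Matrix (Fin (∑ i', (l i' + 1))) (Fin (∑ i', (l i' + 1))) ℂ :=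
  fun k p => deriv (fun t : ℂ => pronyMap l (Function.update x p t) k) (x p)

/-!
The Jacobian factors as `J_P(x) = V * E`, with `V` the confluent Vandermonde matrix on the nodes
with multiplicities `l_i + 1` and `E` block diagonal: the column of `a_{i,j}` is the Vandermonde
column `(i, j)`, and since `∂_ξ ((k)_j ξ^(k-j)) = (k)_(j+1) ξ^(k-j-1)`, the column of `ξ_i` is
`∑_j a_{i,j}` times the Vandermonde column `(i, j + 1)`. Each block of `E` is the identity with its
last column replaced by `(0, a_{i,0}, …, a_{i,l_i-1})`, so `det J_P(x) = det V * ∏_i a_{i,l_i-1}`.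
Equal nodes give equal columns of `V`; for distinct nodes, a left kernel vector of `V` is the
coefficient vector of a polynomial of degree `< ∑ (l_i + 1)` with a root of multiplicity `l_i + 1`
at every `ξ_i`, hence zero.
-/

namespace Matrix

theorem det_one_updateCol {ι R : Type*} [Fintype ι] [DecidableEq ι] [CommRing R] (j : ι)
    (c : ι → R) : ((1 : Matrix ι ι R).updateCol j c).det = c j := by
  rw [← cramer_apply, cramer_one]
  rfl

theorem mul_reindex_blockDiagonal'_apply {ι m n α : Type*} {σ : ι → Type*} [Fintype ι]
    [DecidableEq ι] [∀ i, Fintype (σ i)] [Fintype n] [NonUnitalNonAssocSemiring α]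
    (V : Matrix m n α) (e : (Σ i, σ i) ≃ n) (B : ∀ i, Matrix (σ i) (σ i) α) (k : m) (i : ι)
    (j : σ i) :
    (V * (blockDiagonal' B).reindex e e) k (e ⟨i, j⟩) = ∑ j', V k (e ⟨i, j'⟩) * B i j' j := by
  rw [mul_apply, ← e.sum_comp, Fintype.sum_sigma, Finset.sum_eq_single i]
  · simp
  · intro i' _ hi'
    simp [blockDiagonal'_apply', hi']
  · simp

theorem det_blockDiagonal' {ι R : Type*} {σ : ι → Type*} [Fintype ι] [DecidableEq ι]
    [∀ i, Fintype (σ i)] [∀ i, DecidableEq (σ i)] [CommRing R] (B : ∀ i, Matrix (σ i) (σ i) R) :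
    (blockDiagonal' B).det = ∏ i, (B i).det := by
  let _ : LinearOrder ι := LinearOrder.lift' _ (Fintype.equivFin ι).injective
  rw [(blockTriangular_blockDiagonal' B).det_fintype]
  refine Finset.prod_congr rfl fun i _ => ?_
  rw [← det_reindex_self (Equiv.sigmaSubtype i)]
  congr 1
  ext x y
  exact blockDiagonal'_apply_eq B i x y

end Matrix

namespace Polynomial

theorem sum_rootMultiplicity_le_natDegree {R : Type*} [CommRing R] [IsDomain R] [DecidableEq R]
    (p : R[X]) (s : Finset R) : ∑ x ∈ s, p.rootMultiplicity x ≤ p.natDegree :=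
  calc ∑ x ∈ s, p.rootMultiplicity x = ∑ x ∈ s, p.roots.count x := by simp only [count_roots]
    _ ≤ ∑ x ∈ s ∪ p.roots.toFinset, p.roots.count x :=
      Finset.sum_le_sum_of_subset Finset.subset_union_left
    _ = p.roots.card :=
      Multiset.sum_count_eq_card fun x hx => Finset.mem_union_right _ (Multiset.mem_toFinset.2 hx)
    _ ≤ p.natDegree := card_roots' p

theorem eval_iterate_derivative_degreeLTEquiv_symm {R : Type*} [CommRing R] {N : ℕ}
    (c : Fin N → R) (m : ℕ) (x : R) :
    (derivative^[m] ((degreeLTEquiv R N).symm c : R[X])).eval x =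
      ∑ k, c k * (((k : ℕ).descFactorial m : R) * x ^ ((k : ℕ) - m)) := by
  change (derivative^[m] (∑ k : Fin N, monomial k (c k))).eval x = _
  simp [iterate_derivative_sum, ← C_mul_X_pow_eq_monomial, iterate_derivative_C_mul,
    iterate_derivative_X_pow_eq_natCast_mul, eval_finsetSum]

end Polynomial

theorem encC_eq_finSigmaFinEquiv {n : ℕ} (L : Fin n → ℕ) (i : Fin n) (j : Fin (L i)) :
    encC L i j = finSigmaFinEquiv ⟨i, j⟩ := by
  have hIio : (Finset.univ : Finset (Fin i)).map (Fin.castLEEmb i.2.le) = Finset.Iio i := by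
    ext x
    simp only [Finset.mem_map, Finset.mem_univ, true_and, Fin.castLEEmb_apply, Finset.mem_Iio]
    exact ⟨fun ⟨y, hy⟩ => hy ▸ y.2, fun hx => ⟨⟨x, hx⟩, rfl⟩⟩
  ext
  rw [finSigmaFinEquiv_apply, encC, Fin.val_mk, blockOff, ← hIio, Finset.sum_map]
  rfl

theorem encP_injective {n : ℕ} (l : Fin n → ℕ) (i : Fin n) : Function.Injective (encP l i) :=
  fun j j' h => by
    rw [encP, encP, encC_eq_finSigmaFinEquiv, encC_eq_finSigmaFinEquiv] at h
    simpa using finSigmaFinEquiv.injective h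

theorem encP_ne_encP {n : ℕ} (l : Fin n → ℕ) {i i' : Fin n} (h : i ≠ i') (j : Fin (l i + 1))
    (j' : Fin (l i' + 1)) : encP l i j ≠ encP l i' j' := by
  rw [encP, encP, encC_eq_finSigmaFinEquiv, encC_eq_finSigmaFinEquiv, Ne,
    finSigmaFinEquiv.apply_eq_iff_eq]
  exact fun h' => h (congrArg Sigma.fst h')

theorem sum_sum_ite_encC_eq {M : Type*} [AddCommMonoid M] {n : ℕ} (L : Fin n → ℕ) (i : Fin n)
    (j : Fin (L i)) (f : (i : Fin n) → Fin (L i) → M) :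
    ∑ i', ∑ j' : Fin (L i'), (if encC L i j = encC L i' j' then f i' j' else 0) = f i j := by
  simp only [encC_eq_finSigmaFinEquiv, finSigmaFinEquiv.apply_eq_iff_eq]
  rw [← Fintype.sum_sigma (fun s : (Σ i, Fin (L i)) => if ⟨i, j⟩ = s then f s.1 s.2 else 0)]
  simp

theorem confVand_encC {n : ℕ} (L : Fin n → ℕ) (ξ : Fin n → ℂ) (k : Fin (∑ i, L i))
    (i : Fin n) (j : Fin (L i)) :
    confVand L ξ k (encC L i j) = ((k : ℕ).descFactorial j : ℂ) * ξ i ^ ((k : ℕ) - (j : ℕ)) :=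
  sum_sum_ite_encC_eq L i j _

theorem pronyParam_encP {n : ℕ} (l : Fin n → ℕ) (ξ : Fin n → ℂ)
    (a : (i : Fin n) → Fin (l i) → ℂ) (i : Fin n) (j : Fin (l i + 1)) :
    pronyParam l ξ a (encP l i j) = if h : (j : ℕ) < l i then a i ⟨j, h⟩ else ξ i :=
  sum_sum_ite_encC_eq (fun i => l i + 1) i j _

theorem confVand_det_ne_zero {n : ℕ} (L : Fin n → ℕ) (ξ : Fin n → ℂ)
    (hξ : Function.Injective ξ) : (confVand L ξ).det ≠ 0 := by
  intro h0
  obtain ⟨c, hc0, hcV⟩ := Matrix.exists_vecMul_eq_zero_iff.mpr h0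
  set p : Polynomial ℂ := ↑((Polynomial.degreeLTEquiv ℂ _).symm c)
  have hp0 : p ≠ 0 := fun h =>
    hc0 ((Polynomial.degreeLTEquiv ℂ _).symm.map_eq_zero_iff.1 (Subtype.ext h))
  have hdeg : p.natDegree < ∑ i, L i :=
    (Polynomial.natDegree_lt_iff_degree_lt hp0).2
      (Polynomial.mem_degreeLT.1 ((Polynomial.degreeLTEquiv ℂ _).symm c).2)
  have hmult : ∀ i, L i ≤ p.rootMultiplicity (ξ i) := by
    intro i
    rcases (L i).eq_zero_or_pos with hL | hL
    · simp [hL]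
    refine Nat.le_of_pred_lt (Polynomial.lt_rootMultiplicity_of_isRoot_iterate_derivative hp0
      fun m hm => ?_)
    have hm : m < L i := Nat.lt_of_le_pred hL hm
    have hcol := congrFun hcV (encC L i ⟨m, hm⟩)
    simp only [Matrix.vecMul, dotProduct, confVand_encC, Pi.zero_apply] at hcol
    rw [Polynomial.IsRoot, Polynomial.eval_iterate_derivative_degreeLTEquiv_symm, ← hcol]
  have hsum : ∑ i, L i ≤ p.natDegree :=
    calc ∑ i, L i ≤ ∑ i, p.rootMultiplicity (ξ i) := Finset.sum_le_sum fun i _ => hmult i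
      _ = ∑ x ∈ Finset.univ.image ξ, p.rootMultiplicity x :=
        (Finset.sum_image (f := p.rootMultiplicity) hξ.injOn).symm
      _ ≤ p.natDegree := p.sum_rootMultiplicity_le_natDegree _
  exact hdeg.not_ge hsum

theorem confVand_det_eq_zero_iff {n : ℕ} (L : Fin n → ℕ) (hL : ∀ i, 0 < L i) (ξ : Fin n → ℂ) :
    (confVand L ξ).det = 0 ↔ ∃ i j, i ≠ j ∧ ξ i = ξ j := by
  refine ⟨fun h => ?_, fun ⟨i, j, hij, hξ⟩ => ?_⟩
  · by_contra! hξ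
    exact confVand_det_ne_zero L ξ (fun i j h => by_contra fun hij => hξ i j hij h) h
  · refine Matrix.det_zero_of_column_eq (i := encC L i ⟨0, hL i⟩) (j := encC L j ⟨0, hL j⟩) ?_
      fun k => by simp only [confVand_encC, hξ]
    rw [encC_eq_finSigmaFinEquiv, encC_eq_finSigmaFinEquiv, Ne, finSigmaFinEquiv.apply_eq_iff_eq]
    exact fun h => hij (congrArg Sigma.fst h)

theorem pronyJacobian_apply {n : ℕ} (l : Fin n → ℕ) (x : Fin (∑ i', (l i' + 1)) → ℂ)
    (k p : Fin (∑ i', (l i' + 1))) :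
    pronyJacobian l x k p = ∑ i, ∑ j : Fin (l i),
      ((Pi.single p 1 : _ → ℂ) (encP l i j.castSucc) * ((k : ℕ).descFactorial j : ℂ) *
          x (encP l i (Fin.last (l i))) ^ ((k : ℕ) - (j : ℕ)) +
        x (encP l i j.castSucc) * ((k : ℕ).descFactorial j : ℂ) *
          (((k : ℕ) - (j : ℕ) : ℕ) * x (encP l i (Fin.last (l i))) ^ ((k : ℕ) - (j : ℕ) - 1) *
            (Pi.single p 1 : _ → ℂ) (encP l i (Fin.last (l i))))) := by
  have hcoord : ∀ q, HasDerivAt (fun t => Function.update x p t q) ((Pi.single p 1 : _ → ℂ) q)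
      (x p) :=
    fun q => hasDerivAt_pi.mp (hasDerivAt_update x p (x p)) q
  refine (HasDerivAt.fun_sum fun i _ => HasDerivAt.fun_sum fun j _ => ?_).deriv
  simpa only [Function.update_eq_self] using ((hcoord _).mul_const _).fun_mul ((hcoord _).fun_pow _)

theorem pronyJacobian_magnitude {n : ℕ} (l : Fin n → ℕ) (ξ : Fin n → ℂ)
    (a : (i : Fin n) → Fin (l i) → ℂ) (k : Fin (∑ i', (l i' + 1))) (i : Fin n) (j : Fin (l i)) :
    pronyJacobian l (pronyParam l ξ a) k (encP l i j.castSucc) =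
      ((k : ℕ).descFactorial j : ℂ) * ξ i ^ ((k : ℕ) - (j : ℕ)) := by
  rw [pronyJacobian_apply, Finset.sum_eq_single i]
  · simp [pronyParam_encP, Pi.single_apply, (encP_injective l i).eq_iff]
  · intro i' _ hi'
    simp [encP_ne_encP l hi']
  · simp

theorem pronyJacobian_node {n : ℕ} (l : Fin n → ℕ) (ξ : Fin n → ℂ)
    (a : (i : Fin n) → Fin (l i) → ℂ) (k : Fin (∑ i', (l i' + 1))) (i : Fin n) :
    pronyJacobian l (pronyParam l ξ a) k (encP l i (Fin.last (l i))) =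
      ∑ j : Fin (l i), ((k : ℕ).descFactorial (j + 1) : ℂ) * ξ i ^ ((k : ℕ) - (j + 1)) * a i j := by
  rw [pronyJacobian_apply, Finset.sum_eq_single i]
  · simp only [(encP_injective l i).eq_iff, Fin.castSucc_ne_last, Pi.single_eq_of_ne,
      Pi.single_eq_same, pronyParam_encP, Fin.val_last, Fin.val_castSucc, Fin.is_lt, Fin.eta,
      lt_self_iff_false, ↓reduceDIte, Nat.sub_sub, Nat.descFactorial_succ, Nat.cast_mul, ne_eq,
      not_false_eq_true, zero_mul, mul_one, zero_add]
    exact Finset.sum_congr rfl fun j _ => by ring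
  · intro i' _ hi'
    simp [encP_ne_encP l hi']
  · simp

theorem pronyJacobian_eq_confVand_mul {n : ℕ} (l : Fin n → ℕ) (ξ : Fin n → ℂ)
    (a : (i : Fin n) → Fin (l i) → ℂ) :
    pronyJacobian l (pronyParam l ξ a) = confVand (fun i => l i + 1) ξ *
      (Matrix.blockDiagonal' fun i =>
        (1 : Matrix (Fin (l i + 1)) (Fin (l i + 1)) ℂ).updateCol (Fin.last (l i))
          (Fin.cons 0 (a i))).reindex finSigmaFinEquiv finSigmaFinEquiv := by
  ext k p
  obtain ⟨⟨i, j⟩, rfl⟩ := finSigmaFinEquiv.surjective p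
  rw [Matrix.mul_reindex_blockDiagonal'_apply]
  simp only [← encC_eq_finSigmaFinEquiv, confVand_encC]
  change pronyJacobian l (pronyParam l ξ a) k (encP l i j) = _
  induction j using Fin.lastCases with
  | last =>
    rw [pronyJacobian_node, Fin.sum_univ_succ]
    simp
  | cast j =>
    rw [pronyJacobian_magnitude]
    simp [Matrix.one_apply]

theorem det_pronyJacobian {n : ℕ} (l : Fin n → ℕ) (hl : ∀ i, 1 ≤ l i) (ξ : Fin n → ℂ)
    (a : (i : Fin n) → Fin (l i) → ℂ) :
    (pronyJacobian l (pronyParam l ξ a)).det =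
      (confVand (fun i => l i + 1) ξ).det * ∏ i, a i ⟨l i - 1, Nat.sub_lt (hl i) Nat.one_pos⟩ := by
  rw [pronyJacobian_eq_confVand_mul, Matrix.det_mul, Matrix.det_reindex_self,
    Matrix.det_blockDiagonal']
  refine congrArg _ (Finset.prod_congr rfl fun i _ => ?_)
  have hlast : Fin.last (l i) = Fin.succ ⟨l i - 1, Nat.sub_lt (hl i) Nat.one_pos⟩ :=
    Fin.ext (Nat.sub_add_cancel (hl i)).symm
  rw [Matrix.det_one_updateCol, hlast, Fin.cons_succ]

/-- `x = ((a_{i,j}),(ξ_i))` is a critical point of the Prony map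
(`det J_P(x) = 0`) iff two nodes collide or some highest magnitude vanishes. -/
theorem pronyMap_critical_point_iff
    (n : ℕ) (l : Fin n → ℕ) (hl : ∀ i, 1 ≤ l i)
    (ξ : Fin n → ℂ) (a : (i : Fin n) → Fin (l i) → ℂ) :
    (pronyJacobian l (pronyParam l ξ a)).det = 0 ↔
      (∃ i j : Fin n, i ≠ j ∧ ξ i = ξ j) ∨
        ∃ i, a i ⟨l i - 1, by have := hl i; omega⟩ = 0 := by
  rw [det_pronyJacobian l hl, mul_eq_zero, confVand_det_eq_zero_iff _ fun i => Nat.succ_pos _,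
    Finset.prod_eq_zero_iff]
  simp only [Finset.mem_univ, true_and]
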